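/- Let H be a finite-dimensional Hopf algebra with basis (e_i) and dual basis (e^i). In the Heisenberg double H(H), the element T = Σ_i (ε ⊗ e_i) ⊗ (e^i ⊗ 1) is invertible in H(H) ⊗ H(H) with inverse T̄ = Σ_i (ε ⊗ S(e_i)) ⊗ (e^i ⊗ 1). -/

import Mathlib

open Coalgebra TensorProduct

namespace HeisenbergDouble

variable (K H : Type*) [Field K] [Ring H] [HopfAlgebra K H] [FiniteDimensional K H]

/-- The convolution product on the dual `H* = Module.Dual K H`, as a bilinear map:
`(f · g) x = f x₍₁₎ * g x₍₂₎`. -/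
noncomputable def dmulB : Module.Dual K H →ₗ[K] Module.Dual K H →ₗ[K] Module.Dual K H :=
  LinearMap.mk₂ K
    (fun f g => LinearMap.mul' K K ∘ₗ TensorProduct.map f g ∘ₗ Coalgebra.comul (R := K))
    (fun f f' g => by rw [TensorProduct.map_add_left, LinearMap.add_comp, LinearMap.comp_add])
    (fun c f g => by rw [TensorProduct.map_smul_left, LinearMap.smul_comp, LinearMap.comp_smul])
    (fun f g g' => by rw [TensorProduct.map_add_right, LinearMap.add_comp, LinearMap.comp_add])
    (fun c f g => by rw [TensorProduct.map_smul_right, LinearMap.smul_comp, LinearMap.comp_smul])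

/-- The left action of `H` on `H*` given by `(a ⇀ g) x = g (x * a)`, as a bilinear map. -/
noncomputable def actB : H →ₗ[K] Module.Dual K H →ₗ[K] Module.Dual K H :=
  LinearMap.mk₂ K (fun a g => g ∘ₗ LinearMap.mulRight K a)
    (fun a a' g => by ext x; simp [mul_add])
    (fun c a g => by ext x; simp [mul_smul_comm])
    (fun a g g' => by ext x; simp)
    (fun c a g => by ext x; simp)

/-- The underlying vector space `H* ⊗ H` of the Heisenberg double. -/
abbrev D := Module.Dual K H ⊗[K] H

/-- The multiplication of the Heisenberg double, as a linear map on `D ⊗ D`, implementing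
`(f ⊗ a) · (g ⊗ b) = f · (a₍₁₎ ⇀ g) ⊗ a₍₂₎ * b`. -/
noncomputable def hmulT : D K H ⊗[K] D K H →ₗ[K] D K H :=
  LinearMap.rTensor H
      (TensorProduct.lift (dmulB K H) ∘ₗ
        LinearMap.lTensor (Module.Dual K H) (TensorProduct.lift (actB K H)) ∘ₗ
        (TensorProduct.assoc K (Module.Dual K H) H (Module.Dual K H)).toLinearMap) ∘ₗ
    LinearMap.lTensor ((Module.Dual K H ⊗[K] H) ⊗[K] Module.Dual K H) (LinearMap.mul' K H) ∘ₗ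
    (TensorProduct.tensorTensorTensorComm K (Module.Dual K H ⊗[K] H) H
        (Module.Dual K H) H).toLinearMap ∘ₗ
    LinearMap.rTensor (Module.Dual K H ⊗[K] H)
      ((TensorProduct.assoc K (Module.Dual K H) H H).symm.toLinearMap ∘ₗ
        LinearMap.lTensor (Module.Dual K H) (Coalgebra.comul (R := K)))

/-- The product of two elements of the Heisenberg double. -/
noncomputable def hmul (x y : D K H) : D K H := hmulT K H (x ⊗ₜ y)

/-- The unit `ε ⊗ 1` of the Heisenberg double. -/
noncomputable def hunit : D K H := (Coalgebra.counit (R := K) (A := H)) ⊗ₜ (1 : H)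

end HeisenbergDouble

namespace HeisenbergDouble

variable (K H : Type*) [Field K] [Ring H] [HopfAlgebra K H] [FiniteDimensional K H]

/-- The componentwise multiplication on `H(H) ⊗ H(H)`. -/
noncomputable def hmul2 (x y : D K H ⊗[K] D K H) : D K H ⊗[K] D K H :=
  (TensorProduct.map (hmulT K H) (hmulT K H) ∘ₗ
    (TensorProduct.tensorTensorTensorComm K (D K H) (D K H) (D K H) (D K H)).toLinearMap)
    (x ⊗ₜ y)

end HeisenbergDouble

/-!
Both `T` and `T̄` are images of elements of `H* ⊗ H` under `f ⊗ x ↦ (ε ⊗ x) ⊗ (f ⊗ 1)`. Inside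
`H(H)` the elements `ε ⊗ x` multiply as in `H` and the elements `f ⊗ 1` as in `H*`, so `T T̄` is the
image of `Σᵢⱼ eⁱ eʲ ⊗ eᵢ S(eⱼ)`. Under `H* ⊗ H ≅ End H` this element is the convolution `id ⋆ S`,
which is `η ∘ ε` by the antipode axiom, i.e. `ε ⊗ 1`; symmetrically for `T̄ T` with `S ⋆ id`.
-/

namespace Module.Basis

variable {R M A ι : Type*} [CommSemiring R] [AddCommMonoid M] [Module R M] [Semiring A]
  [Algebra R A] [Fintype ι]

theorem sum_coord_mul_coord_smul_mul (b : Module.Basis ι R M) (F G : M →ₗ[R] A) (x z : M) :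
    ∑ i, ∑ j, (b.coord i x * b.coord j z) • (F (b i) * G (b j)) = F x * G z := by
  have expand (T : M →ₗ[R] A) (y : M) : T y = ∑ i, b.coord i y • T (b i) := by
    conv_lhs => rw [← b.sum_repr y]
    simp only [map_sum, map_smul, coord_apply]
  simp_rw [expand F x, expand G z, Finset.sum_mul_sum, smul_mul_smul_comm]

end Module.Basis

namespace HeisenbergDouble

variable {K H : Type*} [Field K] [Ring H] [HopfAlgebra K H]

theorem hmulT_tmul_tmul (f g : Module.Dual K H) (a b : H) :
    hmulT K H ((f ⊗ₜ a) ⊗ₜ (g ⊗ₜ b)) =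
      TensorProduct.map (dmulB K H f ∘ₗ (actB K H).flip g) (LinearMap.mulRight K b)
        (comul (R := K) a) := by
  rw [hmulT]
  simp only [LinearMap.comp_apply, LinearMap.rTensor_tmul, LinearEquiv.coe_coe,
    LinearMap.lTensor_tmul]
  induction comul (R := K) a using TensorProduct.induction_on with
  | zero => simp
  | tmul x y => simp [tensorTensorTensorComm_tmul, dmulB, actB]
  | add s t hs ht => simp only [tmul_add, add_tmul, map_add, hs, ht]

theorem dmulB_counit_left (g : Module.Dual K H) : dmulB K H (counit (R := K)) g = g := by
  ext y
  simp only [dmulB, LinearMap.mk₂_apply, LinearMap.comp_apply]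
  rw [← LinearMap.lTensor_comp_rTensor, LinearMap.comp_apply, rTensor_counit_comul]
  simp

theorem actB_counit (x : H) :
    actB K H x (counit (R := K)) = counit (R := K) x • counit (R := K) := by
  ext y
  simp [actB, Bialgebra.counit_mul, mul_comm]

theorem hmulT_counit_tmul_counit_tmul (a c : H) :
    hmulT K H ((counit (R := K) ⊗ₜ a) ⊗ₜ (counit (R := K) ⊗ₜ c)) =
      counit (R := K) ⊗ₜ (a * c) := by
  rw [hmulT_tmul_tmul, ← (ℛ K a).eq]
  simp only [map_sum, TensorProduct.map_tmul, LinearMap.comp_apply, LinearMap.flip_apply,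
    actB_counit, map_smul, dmulB_counit_left, LinearMap.mulRight_apply, smul_tmul, ← tmul_sum,
    ← smul_mul_assoc, ← Finset.sum_mul, sum_counit_smul]

theorem hmulT_tmul_one_tmul_one (f g : Module.Dual K H) :
    hmulT K H ((f ⊗ₜ (1 : H)) ⊗ₜ (g ⊗ₜ (1 : H))) = dmulB K H f g ⊗ₜ (1 : H) := by
  rw [hmulT_tmul_tmul, Bialgebra.comul_one, Algebra.TensorProduct.one_def]
  simp only [TensorProduct.map_tmul, LinearMap.comp_apply, LinearMap.flip_apply,
    LinearMap.mulRight_apply, mul_one]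
  congr 2
  ext y
  simp [actB]

theorem hmul2_tmul_tmul (x y z w : D K H) :
    hmul2 K H (x ⊗ₜ y) (z ⊗ₜ w) = hmulT K H (x ⊗ₜ z) ⊗ₜ hmulT K H (y ⊗ₜ w) := rfl

theorem hmul2_sum_sum {ι κ : Type*} (s : Finset ι) (t : Finset κ) (x : ι → D K H ⊗[K] D K H)
    (y : κ → D K H ⊗[K] D K H) :
    hmul2 K H (∑ i ∈ s, x i) (∑ j ∈ t, y j) = ∑ i ∈ s, ∑ j ∈ t, hmul2 K H (x i) (y j) := by
  simp only [hmul2, sum_tmul, tmul_sum, map_sum]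
  exact Finset.sum_comm

theorem dualTensorHom_sum_dmulB_coord_tmul {ι : Type*} [Fintype ι] (b : Module.Basis ι K H)
    (F G : H →ₗ[K] H) :
    dualTensorHom K H H
        (∑ i, ∑ j, dmulB K H (b.coord i) (b.coord j) ⊗ₜ (F (b i) * G (b j))) =
      LinearMap.mul' K H ∘ₗ TensorProduct.map F G ∘ₗ comul := by
  ext y
  simp only [map_sum, LinearMap.sum_apply, dualTensorHom_apply,
    LinearMap.comp_apply, dmulB, LinearMap.mk₂_apply]
  induction comul (R := K) y using TensorProduct.induction_on with
  | zero => simp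
  | tmul x z => simpa using b.sum_coord_mul_coord_smul_mul F G x z
  | add s t hs ht => simp only [map_add, add_smul, Finset.sum_add_distrib, hs, ht]

theorem sum_dmulB_coord_tmul_eq_counit_tmul_one {ι : Type*} [Fintype ι]
    (b : Module.Basis ι K H) (F G : H →ₗ[K] H)
    (hFG : LinearMap.mul' K H ∘ₗ TensorProduct.map F G ∘ₗ comul (R := K) =
      Algebra.linearMap K H ∘ₗ counit (R := K)) :
    ∑ i, ∑ j, dmulB K H (b.coord i) (b.coord j) ⊗ₜ (F (b i) * G (b j)) =
      counit (R := K) (A := H) ⊗ₜ[K] (1 : H) := by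
  classical
  apply (dualTensorHomEquivOfBasis b).injective
  rw [dualTensorHomEquivOfBasis_apply, dualTensorHomEquivOfBasis_apply,
    dualTensorHom_sum_dmulB_coord_tmul, hFG]
  ext y
  simp [Algebra.algebraMap_eq_smul_one]

noncomputable def canonicalElement {ι : Type*} [Fintype ι] (b : Module.Basis ι K H)
    (F : H →ₗ[K] H) : D K H ⊗[K] D K H :=
  ∑ i, ((counit (R := K) ⊗ₜ F (b i) : D K H) ⊗ₜ (b.coord i ⊗ₜ (1 : H) : D K H))

theorem hmul2_canonicalElement_eq_hunit_tmul_hunit {ι : Type*} [Fintype ι]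
    (b : Module.Basis ι K H) (F G : H →ₗ[K] H)
    (hFG : LinearMap.mul' K H ∘ₗ TensorProduct.map F G ∘ₗ comul (R := K) =
      Algebra.linearMap K H ∘ₗ counit (R := K)) :
    hmul2 K H (canonicalElement b F) (canonicalElement b G) = hunit K H ⊗ₜ hunit K H := by
  let Φ : Module.Dual K H ⊗[K] H →ₗ[K] D K H ⊗[K] D K H :=
    (TensorProduct.comm K (D K H) (D K H)).toLinearMap ∘ₗ
      TensorProduct.map ((TensorProduct.mk K _ H).flip 1) (TensorProduct.mk K _ H counit)
  have hΦ (f : Module.Dual K H) (x : H) :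
      Φ (f ⊗ₜ x) = (counit (R := K) ⊗ₜ x : D K H) ⊗ₜ (f ⊗ₜ (1 : H) : D K H) := rfl
  calc _ = ∑ i, ∑ j, Φ (dmulB K H (b.coord i) (b.coord j) ⊗ₜ (F (b i) * G (b j))) := by
        simp only [canonicalElement, hmul2_sum_sum, hmul2_tmul_tmul,
          hmulT_counit_tmul_counit_tmul, hmulT_tmul_one_tmul_one, hΦ]
    _ = Φ (counit ⊗ₜ 1) := by
        rw [← sum_dmulB_coord_tmul_eq_counit_tmul_one b F G hFG]
        simp only [map_sum]
    _ = hunit K H ⊗ₜ hunit K H := rfl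

end HeisenbergDouble

open HeisenbergDouble in
theorem canonical_element_invertible_general
    (K H : Type*) [Field K] [Ring H] [HopfAlgebra K H]
    (ι : Type*) [Fintype ι] (b : Module.Basis ι K H) :
    hmul2 K H
        (∑ i, (((Coalgebra.counit (R := K) (A := H) ⊗ₜ b i) : D K H) ⊗ₜ
          (((b.coord i : Module.Dual K H) ⊗ₜ (1 : H)) : D K H)))
        (∑ i, (((Coalgebra.counit (R := K) (A := H) ⊗ₜ
            HopfAlgebra.antipode (R := K) (A := H) (b i)) : D K H) ⊗ₜ
          (((b.coord i : Module.Dual K H) ⊗ₜ (1 : H)) : D K H))) =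
      hunit K H ⊗ₜ hunit K H ∧
    hmul2 K H
        (∑ i, (((Coalgebra.counit (R := K) (A := H) ⊗ₜ
            HopfAlgebra.antipode (R := K) (A := H) (b i)) : D K H) ⊗ₜ
          (((b.coord i : Module.Dual K H) ⊗ₜ (1 : H)) : D K H)))
        (∑ i, (((Coalgebra.counit (R := K) (A := H) ⊗ₜ b i) : D K H) ⊗ₜ
          (((b.coord i : Module.Dual K H) ⊗ₜ (1 : H)) : D K H))) =
      hunit K H ⊗ₜ hunit K H :=
  ⟨hmul2_canonicalElement_eq_hunit_tmul_hunit b .id _ HopfAlgebra.mul_antipode_lTensor_comul,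
    hmul2_canonicalElement_eq_hunit_tmul_hunit b _ .id HopfAlgebra.mul_antipode_rTensor_comul⟩

open HeisenbergDouble in
/-- The canonical element `T = Σᵢ (ε ⊗ eᵢ) ⊗ (eⁱ ⊗ 1)` of the Heisenberg double of a
finite-dimensional Hopf algebra is invertible in `H(H) ⊗ H(H)` with inverse
`T̄ = Σᵢ (ε ⊗ S eᵢ) ⊗ (eⁱ ⊗ 1)`. -/
theorem canonical_element_invertible
    (K H : Type*) [Field K] [Ring H] [HopfAlgebra K H] [FiniteDimensional K H]
    (ι : Type*) [Fintype ι] (b : Module.Basis ι K H) :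
    hmul2 K H
        (∑ i, (((Coalgebra.counit (R := K) (A := H) ⊗ₜ b i) : D K H) ⊗ₜ
          (((b.coord i : Module.Dual K H) ⊗ₜ (1 : H)) : D K H)))
        (∑ i, (((Coalgebra.counit (R := K) (A := H) ⊗ₜ
            HopfAlgebra.antipode (R := K) (A := H) (b i)) : D K H) ⊗ₜ
          (((b.coord i : Module.Dual K H) ⊗ₜ (1 : H)) : D K H))) =
      hunit K H ⊗ₜ hunit K H ∧
    hmul2 K H
        (∑ i, (((Coalgebra.counit (R := K) (A := H) ⊗ₜ
            HopfAlgebra.antipode (R := K) (A := H) (b i)) : D K H) ⊗ₜ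
          (((b.coord i : Module.Dual K H) ⊗ₜ (1 : H)) : D K H)))
        (∑ i, (((Coalgebra.counit (R := K) (A := H) ⊗ₜ b i) : D K H) ⊗ₜ
          (((b.coord i : Module.Dual K H) ⊗ₜ (1 : H)) : D K H))) =
      hunit K H ⊗ₜ hunit K H :=
  canonical_element_invertible_general K H ι b
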